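/- Let φ be a state on R⟨x₁,…,x_d⟩ with a monic orthogonal polynomial system. Then for any two distinct multi-indices u ≠ w of the same length n, the mixed moment satisfies ⟨x_u, x_w⟩ = Σ_{|v|<n, ‖P_v‖≠0} ⟨x_u,P_v⟩⟨P_v,x_w⟩ / ⟨P_v,P_v⟩, where {P_v} is the MOPS obtained from the Gram–Schmidt recursion. In particular the even non-symmetric moments of φ are determined by its remaining moments. -/

import Mathlib

noncomputable section
open scoped Classical

abbrev NCPoly (d : ℕ) := FreeAlgebra ℝ (Fin d)

/-- The monomial x_u = x_{u(1)} ⋯ x_{u(k)}. -/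
def Xmon {d : ℕ} (u : List (Fin d)) : NCPoly d := (u.map (FreeAlgebra.ι ℝ)).prod

/-- A state on ℝ⟨x₁,…,x_d⟩. -/
structure IsState {d : ℕ} (φ : NCPoly d →ₗ[ℝ] ℝ) : Prop where
  unital : φ 1 = 1
  star_comp : ∀ p : NCPoly d, φ (star p) = φ p
  pos : ∀ p : NCPoly d, 0 ≤ φ (star p * p)

def ipS {d : ℕ} (φ : NCPoly d →ₗ[ℝ] ℝ) (p q : NCPoly d) : ℝ := φ (star p * q)

def nrmS {d : ℕ} (φ : NCPoly d →ₗ[ℝ] ℝ) (p : NCPoly d) : ℝ := Real.sqrt (ipS φ p p)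

def IsMonicFamily {d : ℕ} (P : List (Fin d) → NCPoly d) : Prop :=
  ∀ u, P u - Xmon u ∈
    Submodule.span ℝ {q : NCPoly d | ∃ v : List (Fin d), v.length < u.length ∧ q = Xmon v}

def IsMOPS {d : ℕ} (φ : NCPoly d →ₗ[ℝ] ℝ) (P : List (Fin d) → NCPoly d) : Prop :=
  IsMonicFamily P ∧ ∀ u v, u ≠ v → ipS φ (P u) (P v) = 0

def wordsLen (d : ℕ) : ℕ → Finset (List (Fin d))
  | 0 => {[]}
  | k + 1 => ((Finset.univ : Finset (Fin d)) ×ˢ wordsLen d k).image fun p => p.1 :: p.2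

def lowWords (d n : ℕ) : Finset (List (Fin d)) := (Finset.range n).biUnion (wordsLen d)

/-- Gram-Schmidt recursion. -/
def IsGS {d : ℕ} (φ : NCPoly d →ₗ[ℝ] ℝ) (P : List (Fin d) → NCPoly d) : Prop :=
  ∀ u, P u = Xmon u - ∑ v ∈ (lowWords d u.length).filter (fun v => nrmS φ (P v) ≠ 0),
      (ipS φ (Xmon u) (P v) / (nrmS φ (P v)) ^ 2) • P v

/-! ### Auxiliary lemmas -/

lemma ncstar_smul {d : ℕ} (a : ℝ) (p : NCPoly d) : star (a • p) = a • star p := by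
  rw [Algebra.smul_def, Algebra.smul_def, star_mul]
  rw [show star ((algebraMap ℝ (NCPoly d)) a) = algebraMap ℝ _ a by
    simp [FreeAlgebra.star_algebraMap]]
  rw [← Algebra.commutes]

/-- The inner product as a bilinear map. -/
def ipL {d : ℕ} (φ : NCPoly d →ₗ[ℝ] ℝ) : NCPoly d →ₗ[ℝ] NCPoly d →ₗ[ℝ] ℝ :=
  LinearMap.mk₂ ℝ (fun p q => φ (star p * q))
    (fun p p' q => by simp [star_add, add_mul])
    (fun a p q => by
      show φ (star (a • p) * q) = a • φ (star p * q)
      rw [ncstar_smul, smul_mul_assoc, map_smul, smul_eq_mul])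
    (fun p q q' => by simp [mul_add])
    (fun a p q => by
      show φ (star p * (a • q)) = a • φ (star p * q)
      rw [mul_smul_comm, map_smul, smul_eq_mul])

lemma ipS_eq {d : ℕ} (φ : NCPoly d →ₗ[ℝ] ℝ) (p q : NCPoly d) :
    ipS φ p q = ipL φ p q := rfl

lemma ip_add_left {d : ℕ} (φ : NCPoly d →ₗ[ℝ] ℝ) (p p' q : NCPoly d) :
    ipS φ (p + p') q = ipS φ p q + ipS φ p' q := by
  simp [ipS_eq, map_add, LinearMap.add_apply]

lemma ip_add_right {d : ℕ} (φ : NCPoly d →ₗ[ℝ] ℝ) (p q q' : NCPoly d) :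
    ipS φ p (q + q') = ipS φ p q + ipS φ p q' := by
  simp [ipS_eq, map_add]

lemma ip_sub_left {d : ℕ} (φ : NCPoly d →ₗ[ℝ] ℝ) (p p' q : NCPoly d) :
    ipS φ (p - p') q = ipS φ p q - ipS φ p' q := by
  simp [ipS_eq, map_sub, LinearMap.sub_apply]

lemma ip_sub_right {d : ℕ} (φ : NCPoly d →ₗ[ℝ] ℝ) (p q q' : NCPoly d) :
    ipS φ p (q - q') = ipS φ p q - ipS φ p q' := by
  simp [ipS_eq, map_sub]

lemma ip_smul_left {d : ℕ} (φ : NCPoly d →ₗ[ℝ] ℝ) (a : ℝ) (p q : NCPoly d) :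
    ipS φ (a • p) q = a * ipS φ p q := by
  simp [ipS_eq, map_smul, LinearMap.smul_apply]

lemma ip_smul_right {d : ℕ} (φ : NCPoly d →ₗ[ℝ] ℝ) (a : ℝ) (p q : NCPoly d) :
    ipS φ p (a • q) = a * ipS φ p q := by
  simp [ipS_eq, map_smul]

lemma ip_zero_left {d : ℕ} (φ : NCPoly d →ₗ[ℝ] ℝ) (q : NCPoly d) :
    ipS φ 0 q = 0 := by
  simp [ipS_eq, map_zero, LinearMap.zero_apply]

lemma ip_sum_left {d : ℕ} (φ : NCPoly d →ₗ[ℝ] ℝ) {ι : Type*} (s : Finset ι)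
    (f : ι → NCPoly d) (q : NCPoly d) :
    ipS φ (∑ i ∈ s, f i) q = ∑ i ∈ s, ipS φ (f i) q := by
  simp [ipS_eq, map_sum, LinearMap.sum_apply]

lemma ip_sum_right {d : ℕ} (φ : NCPoly d →ₗ[ℝ] ℝ) {ι : Type*} (s : Finset ι)
    (f : ι → NCPoly d) (q : NCPoly d) :
    ipS φ q (∑ i ∈ s, f i) = ∑ i ∈ s, ipS φ q (f i) := by
  simp [ipS_eq, map_sum]

lemma ip_symm {d : ℕ} {φ : NCPoly d →ₗ[ℝ] ℝ} (hφ : IsState φ) (p q : NCPoly d) :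
    ipS φ p q = ipS φ q p := by
  unfold ipS
  rw [← hφ.star_comp (star p * q), star_mul, star_star]

lemma ip_expand {d : ℕ} (φ : NCPoly d →ₗ[ℝ] ℝ) (p q : NCPoly d) (t : ℝ) :
    ipS φ (q + t • p) (q + t • p)
      = ipS φ q q + t * ipS φ q p + t * ipS φ p q + t * t * ipS φ p p := by
  rw [ip_add_left, ip_add_right, ip_add_right, ip_smul_left, ip_smul_right,
    ip_smul_right, ip_smul_left]
  ring

lemma ip_null {d : ℕ} {φ : NCPoly d →ₗ[ℝ] ℝ} (hφ : IsState φ) {p : NCPoly d}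
    (h : ipS φ p p = 0) (q : NCPoly d) : ipS φ p q = 0 := by
  by_contra hb
  have key : ∀ t : ℝ, 0 ≤ ipS φ q q + 2 * t * ipS φ p q := by
    intro t
    have h0 := hφ.pos (q + t • p)
    have he := ip_expand φ p q t
    rw [ip_symm hφ q p, h] at he
    have h2 : ipS φ (q + t • p) (q + t • p) = ipS φ q q + 2 * t * ipS φ p q := by
      rw [he]; ring
    rw [← h2]; exact h0
  have hc := key ((-(ipS φ q q) - 1) / (2 * ipS φ p q))
  have h2 : 2 * ((-(ipS φ q q) - 1) / (2 * ipS φ p q)) * ipS φ p q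
      = -(ipS φ q q) - 1 := by field_simp
  rw [h2] at hc
  linarith

lemma ip_null' {d : ℕ} {φ : NCPoly d →ₗ[ℝ] ℝ} (hφ : IsState φ) {p : NCPoly d}
    (h : ipS φ p p = 0) (q : NCPoly d) : ipS φ q p = 0 := by
  rw [ip_symm hφ]; exact ip_null hφ h q

lemma nrm_sq {d : ℕ} {φ : NCPoly d →ₗ[ℝ] ℝ} (hφ : IsState φ) (p : NCPoly d) :
    nrmS φ p ^ 2 = ipS φ p p := Real.sq_sqrt (hφ.pos p)

lemma nrm_zero {d : ℕ} {φ : NCPoly d →ₗ[ℝ] ℝ} (hφ : IsState φ) {p : NCPoly d}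
    (h : nrmS φ p = 0) : ipS φ p p = 0 := by
  have := nrm_sq hφ p; rw [h] at this; simpa using this.symm

lemma nrm_ne_zero {d : ℕ} {φ : NCPoly d →ₗ[ℝ] ℝ} (hφ : IsState φ) {p : NCPoly d}
    (h : nrmS φ p ≠ 0) : ipS φ p p ≠ 0 := by
  intro h0
  exact h (by simp [nrmS, h0])

lemma mem_wordsLen {d : ℕ} : ∀ {k : ℕ} {v : List (Fin d)},
    v ∈ wordsLen d k ↔ v.length = k := by
  intro k
  induction k with
  | zero => intro v; simp [wordsLen, List.length_eq_zero_iff]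
  | succ k ih =>
    intro v
    constructor
    · intro hv
      simp only [wordsLen, Finset.mem_image, Finset.mem_product] at hv
      obtain ⟨⟨a, t⟩, ⟨_, ht⟩, rfl⟩ := hv
      simp [ih.mp ht]
    · intro hv
      match v with
      | a :: t =>
        simp only [wordsLen, Finset.mem_image]
        exact ⟨(a, t), by simp [Finset.mem_product, ih, Nat.succ_injective hv], rfl⟩

lemma mem_lowWords {d : ℕ} {n : ℕ} {v : List (Fin d)} :
    v ∈ lowWords d n ↔ v.length < n := by
  simp [lowWords, Finset.mem_biUnion, mem_wordsLen]

/-- Span of monomials of length `< n`. -/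
def Lspan (d n : ℕ) : Submodule ℝ (NCPoly d) :=
  Submodule.span ℝ {q : NCPoly d | ∃ v : List (Fin d), v.length < n ∧ q = Xmon v}

lemma Lspan_mono {d : ℕ} {m n : ℕ} (h : m ≤ n) : Lspan d m ≤ Lspan d n :=
  Submodule.span_mono (fun q hq => by
    obtain ⟨v, hv, he⟩ := hq; exact ⟨v, lt_of_lt_of_le hv h, he⟩)

lemma Xmon_mem_Lspan {d : ℕ} {v : List (Fin d)} {n : ℕ} (h : v.length < n) :
    Xmon v ∈ Lspan d n := Submodule.subset_span ⟨v, h, rfl⟩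

/-- Orthogonality to a spanning set extends to the span. -/
lemma perp_span {d : ℕ} (φ : NCPoly d →ₗ[ℝ] ℝ) {s : Set (NCPoly d)} {q : NCPoly d}
    (h : ∀ x ∈ s, ipS φ x q = 0) :
    ∀ x ∈ Submodule.span ℝ s, ipS φ x q = 0 := by
  intro x hx
  refine Submodule.span_induction (p := fun x _ => ipS φ x q = 0) h (ip_zero_left φ q)
    (fun a b _ _ ha hb => by
      show ipS φ (a + b) q = 0
      rw [ip_add_left]
      rw [ha, hb, add_zero])
    (fun a b _ hb => by
      show ipS φ (a • b) q = 0
      rw [ip_smul_left, hb, mul_zero]) hx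

lemma P_mem_Lspan {d : ℕ} {φ : NCPoly d →ₗ[ℝ] ℝ} {P : List (Fin d) → NCPoly d}
    (hGS : IsGS φ P) :
    ∀ n : ℕ, ∀ u : List (Fin d), u.length = n →
      P u - Xmon u ∈ Lspan d n ∧ P u ∈ Lspan d (n + 1) := by
  intro n
  induction n using Nat.strong_induction_on with
  | _ n ih =>
    intro u hu
    have hsub : P u - Xmon u ∈ Lspan d n := by
      rw [hGS u, sub_sub_cancel_left]
      refine neg_mem (Submodule.sum_mem _ ?_)
      intro v hv
      rw [Finset.mem_filter, mem_lowWords, hu] at hv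
      refine Submodule.smul_mem _ _ ?_
      exact Lspan_mono (by omega) ((ih v.length hv.1 v rfl).2)
    refine ⟨hsub, ?_⟩
    have : P u = (P u - Xmon u) + Xmon u := by abel
    rw [this]
    exact add_mem (Lspan_mono (Nat.le_succ n) hsub)
      (Xmon_mem_Lspan (by omega))

lemma Qperp_gen {d : ℕ} {φ : NCPoly d →ₗ[ℝ] ℝ} {Q : List (Fin d) → NCPoly d}
    (hQ : IsMOPS φ Q) :
    ∀ k : ℕ, ∀ v' : List (Fin d), v'.length = k → ∀ v : List (Fin d), k < v.length →
      ipS φ (Xmon v') (Q v) = 0 := by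
  intro k
  induction k using Nat.strong_induction_on with
  | _ k ih =>
    intro v' hv' v hk
    have hne : v' ≠ v := by intro h; subst h; omega
    have h1 : ipS φ (Q v') (Q v) = 0 := hQ.2 _ _ hne
    have h2 : Q v' - Xmon v' ∈ Lspan d k := by
      rw [← hv']; exact hQ.1 v'
    have h3 : ipS φ (Q v' - Xmon v') (Q v) = 0 := by
      refine perp_span φ ?_ _ h2
      rintro x ⟨v'', hlt, rfl⟩
      exact ih v''.length hlt v'' rfl v (lt_trans hlt hk)
    have h4 : ipS φ (Xmon v') (Q v)
        = ipS φ (Q v') (Q v) - ipS φ (Q v' - Xmon v') (Q v) := by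
      rw [← ip_sub_left]
      congr 1
      abel
    rw [h4, h1, h3, sub_zero]

/-- Master orthogonality lemma for the Gram–Schmidt family. -/
lemma master {d : ℕ} {φ : NCPoly d →ₗ[ℝ] ℝ} (hφ : IsState φ)
    {Q : List (Fin d) → NCPoly d} (hQ : IsMOPS φ Q)
    {P : List (Fin d) → NCPoly d} (hGS : IsGS φ P) :
    ∀ n : ℕ,
      (∀ u : List (Fin d), u.length = n → ∀ v : List (Fin d), v.length < n →
         ipS φ (P v) (P u) = 0) ∧
      (∀ u : List (Fin d), u.length = n → ∀ v : List (Fin d), v.length < n →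
         ipS φ (Xmon v) (P u) = 0) ∧
      (∀ u w : List (Fin d), u.length = n → w.length = n → w ≠ u →
         ipS φ (P w) (P u) = 0) := by
  intro n
  induction n using Nat.strong_induction_on with
  | _ n ih =>
    have hA : ∀ u : List (Fin d), u.length = n → ∀ v : List (Fin d), v.length < n →
        ipS φ (P v) (P u) = 0 := by
      intro u hu v hv
      by_cases hz : nrmS φ (P v) = 0
      · exact ip_null hφ (nrm_zero hφ hz) _
      · rw [hGS u, ip_sub_right, ip_sum_right]
        have hvF : v ∈ (lowWords d u.length).filter (fun v => nrmS φ (P v) ≠ 0) := by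
          rw [Finset.mem_filter, mem_lowWords, hu]; exact ⟨hv, hz⟩
        rw [Finset.sum_eq_single_of_mem v hvF ?off]
        · rw [ip_smul_right, nrm_sq hφ,
            div_mul_cancel₀ _ (nrm_ne_zero hφ hz), ip_symm hφ (P v) (Xmon u), sub_self]
        · intro v' hv' hne
          rw [Finset.mem_filter, mem_lowWords, hu] at hv'
          rw [ip_smul_right]
          have : ipS φ (P v) (P v') = 0 := by
            rcases lt_trichotomy v.length v'.length with hlt | heq | hgt
            · exact (ih v'.length hv'.1).1 v' rfl v hlt
            · exact (ih v'.length hv'.1).2.2 v' v rfl heq hne.symm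
            · rw [ip_symm hφ]
              exact (ih v.length hv).1 v rfl v' hgt
          rw [this, mul_zero]
    have hB : ∀ k : ℕ, ∀ v : List (Fin d), v.length = k → k < n →
        ∀ u : List (Fin d), u.length = n → ipS φ (Xmon v) (P u) = 0 := by
      intro k
      induction k using Nat.strong_induction_on with
      | _ k ihk =>
        intro v hv hk u hu
        have h1 : ipS φ (P v) (P u) = 0 := hA u hu v (by omega)
        have h2 : P v - Xmon v ∈ Lspan d k := by
          rw [← hv]; exact (P_mem_Lspan hGS v.length v rfl).1
        have h3 : ipS φ (P v - Xmon v) (P u) = 0 := by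
          refine perp_span φ ?_ _ h2
          rintro x ⟨v'', hlt, rfl⟩
          exact ihk v''.length hlt v'' rfl (by omega) u hu
        have h4 : ipS φ (Xmon v) (P u)
            = ipS φ (P v) (P u) - ipS φ (P v - Xmon v) (P u) := by
          rw [← ip_sub_left]; congr 1; abel
        rw [h4, h1, h3, sub_zero]
    have hBspan : ∀ u : List (Fin d), u.length = n →
        ∀ x ∈ Lspan d n, ipS φ x (P u) = 0 := by
      intro u hu
      refine perp_span φ ?_
      rintro x ⟨v'', hlt, rfl⟩
      exact hB v''.length v'' rfl hlt u hu
    have hQspan : ∀ u : List (Fin d), u.length = n →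
        ∀ x ∈ Lspan d n, ipS φ x (Q u) = 0 := by
      intro u hu
      refine perp_span φ ?_
      rintro x ⟨v'', hlt, rfl⟩
      exact Qperp_gen hQ v''.length v'' rfl u (by omega)
    have hC : ∀ u w : List (Fin d), u.length = n → w.length = n → w ≠ u →
        ipS φ (P w) (P u) = 0 := by
      intro u w hu hw hne
      have hru : P u - Q u ∈ Lspan d n := by
        have h1 : P u - Xmon u ∈ Lspan d n := by
          rw [← hu]; exact (P_mem_Lspan hGS u.length u rfl).1
        have h2 : Q u - Xmon u ∈ Lspan d n := by rw [← hu]; exact hQ.1 u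
        have : P u - Q u = (P u - Xmon u) - (Q u - Xmon u) := by abel
        rw [this]; exact sub_mem h1 h2
      have hrw : P w - Q w ∈ Lspan d n := by
        have h1 : P w - Xmon w ∈ Lspan d n := by
          rw [← hw]; exact (P_mem_Lspan hGS w.length w rfl).1
        have h2 : Q w - Xmon w ∈ Lspan d n := by rw [← hw]; exact hQ.1 w
        have : P w - Q w = (P w - Xmon w) - (Q w - Xmon w) := by abel
        rw [this]; exact sub_mem h1 h2
      have hrnull : ipS φ (P u - Q u) (P u - Q u) = 0 := by
        rw [ip_sub_right, hBspan u hu _ hru, hQspan u hu _ hru, sub_zero]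
      have e1 : ipS φ (P w) (P u)
          = ipS φ (P w) (Q u) + ipS φ (P w) (P u - Q u) := by
        rw [← ip_add_right]; congr 1; abel
      have e2 : ipS φ (P w) (Q u)
          = ipS φ (Q w) (Q u) + ipS φ (P w - Q w) (Q u) := by
        rw [← ip_add_left]; congr 1; abel
      rw [e1, e2, hQ.2 w u hne, hQspan u hu _ hrw,
        ip_null' hφ hrnull (P w)]
      ring
    exact ⟨hA, fun u hu v hv => hB v.length v rfl (by omega) u hu, hC⟩

/-- Full orthogonality of the Gram–Schmidt family. -/
lemma P_orth_all {d : ℕ} {φ : NCPoly d →ₗ[ℝ] ℝ} (hφ : IsState φ)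
    {Q : List (Fin d) → NCPoly d} (hQ : IsMOPS φ Q)
    {P : List (Fin d) → NCPoly d} (hGS : IsGS φ P) :
    ∀ v v' : List (Fin d), v ≠ v' → ipS φ (P v) (P v') = 0 := by
  intro v v' hne
  rcases lt_trichotomy v.length v'.length with hlt | heq | hgt
  · exact (master hφ hQ hGS v'.length).1 v' rfl v hlt
  · exact (master hφ hQ hGS v'.length).2.2 v' v rfl heq hne
  · rw [ip_symm hφ]
    exact (master hφ hQ hGS v.length).1 v rfl v' hgt

/-- for a state with a MOPS, mixed moments of equal-length words are
determined by the lower-order data, via the Gram–Schmidt polynomials. -/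
theorem mixed_moments_determined {d : ℕ} (φ : NCPoly d →ₗ[ℝ] ℝ) (hφ : IsState φ)
    (hmops : ∃ Q : List (Fin d) → NCPoly d, IsMOPS φ Q)
    (P : List (Fin d) → NCPoly d) (hGS : IsGS φ P)
    (n : ℕ) (u w : List (Fin d)) (hu : u.length = n) (hw : w.length = n) (huw : u ≠ w) :
    ipS φ (Xmon u) (Xmon w) =
      ∑ v ∈ (lowWords d n).filter (fun v => nrmS φ (P v) ≠ 0),
        ipS φ (Xmon u) (P v) * ipS φ (P v) (Xmon w) / ipS φ (P v) (P v) := by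
  obtain ⟨Q, hQ⟩ := hmops
  set F := (lowWords d n).filter (fun v => nrmS φ (P v) ≠ 0) with hF
  have horth := P_orth_all hφ hQ hGS
  have hlow : ∀ v ∈ F, v.length < n := by
    intro v hv; rw [hF, Finset.mem_filter, mem_lowWords] at hv; exact hv.1
  have hnz : ∀ v ∈ F, ipS φ (P v) (P v) ≠ 0 := by
    intro v hv; rw [hF, Finset.mem_filter] at hv; exact nrm_ne_zero hφ hv.2
  have hXu : Xmon u = P u + ∑ v ∈ F, (ipS φ (Xmon u) (P v) / (nrmS φ (P v)) ^ 2) • P v := by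
    have e := hGS u
    rw [hu] at e
    rw [e]; abel
  have hXw : Xmon w = P w + ∑ v ∈ F, (ipS φ (Xmon w) (P v) / (nrmS φ (P v)) ^ 2) • P v := by
    have e := hGS w
    rw [hw] at e
    rw [e]; abel
  have hPuv : ∀ v ∈ F, ipS φ (P u) (P v) = 0 := by
    intro v hv
    exact horth u v (by intro h; have := hlow v hv; rw [← h] at this; omega)
  have hPvw : ∀ v ∈ F, ipS φ (P v) (P w) = 0 := by
    intro v hv
    exact horth v w (by intro h; have := hlow v hv; rw [h] at this; omega)
  have hPuw : ipS φ (P u) (P w) = 0 := by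
    refine (master hφ hQ hGS n).2.2 w u hw hu huw
  conv_lhs => rw [hXu, hXw]
  rw [ip_add_left, ip_add_right, ip_sum_right, ip_sum_left]
  have t1 : ∀ v ∈ F, ipS φ (P u) ((ipS φ (Xmon w) (P v) / (nrmS φ (P v)) ^ 2) • P v) = 0 := by
    intro v hv; rw [ip_smul_right, hPuv v hv, mul_zero]
  have t2 : ∑ v ∈ F, ipS φ (P u) ((ipS φ (Xmon w) (P v) / (nrmS φ (P v)) ^ 2) • P v) = 0 :=
    Finset.sum_eq_zero t1
  have t3 : ∑ v ∈ F, ipS φ ((ipS φ (Xmon u) (P v) / (nrmS φ (P v)) ^ 2) • P v)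
      (P w + ∑ v' ∈ F, (ipS φ (Xmon w) (P v') / (nrmS φ (P v')) ^ 2) • P v')
      = ∑ v ∈ F, ipS φ (Xmon u) (P v) * ipS φ (P v) (Xmon w) / ipS φ (P v) (P v) := by
    refine Finset.sum_congr rfl ?_
    intro v hv
    rw [ip_smul_left, ip_add_right, hPvw v hv, zero_add, ip_sum_right]
    rw [Finset.sum_eq_single_of_mem v hv ?off]
    · rw [ip_smul_right, nrm_sq hφ]
      have hb := hnz v hv
      rw [ip_symm hφ (P v) (Xmon w)]
      field_simp
    · intro v' hv' hne
      rw [ip_smul_right, horth v v' hne.symm, mul_zero]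
  rw [hPuw, t2, t3, zero_add, zero_add]
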